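/- Let R be a Γ-graded ring. Then R has graded stable range 1 (the right-sided condition) if and only if R has left graded stable range 1. -/
import Mathlib


/-- `R` has (right) graded stable range 1. -/
def GradedStableRangeOne {Γ R : Type*} [AddGroup Γ] [Ring R]
    (𝒜 : Γ → AddSubgroup R) : Prop :=
  ∀ γ δ : Γ, ∀ a ∈ 𝒜 γ, ∀ b ∈ 𝒜 δ,
    (∃ c ∈ 𝒜 (-γ), ∃ d ∈ 𝒜 (-δ), a * c + b * d = 1) →
    ∃ y ∈ 𝒜 (-δ + γ), IsUnit (a + b * y)

/-- `R` has left graded stable range 1. -/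
def LeftGradedStableRangeOne {Γ R : Type*} [AddGroup Γ] [Ring R]
    (𝒜 : Γ → AddSubgroup R) : Prop :=
  ∀ γ δ : Γ, ∀ a ∈ 𝒜 γ, ∀ b ∈ 𝒜 δ,
    (∃ c ∈ 𝒜 (-γ), ∃ d ∈ 𝒜 (-δ), c * a + d * b = 1) →
    ∃ y ∈ 𝒜 (γ + -δ), IsUnit (a + y * b)

/-- Vaserstein-type flip: if `a + (1 - a*c)*z` is a unit, so is `a + z*(1 - c*a)`. -/
lemma flip_unit_right_to_left {R : Type*} [Ring R] (a c z : R)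
    (h : IsUnit (a + (1 - a * c) * z)) : IsUnit (a + z * (1 - c * a)) := by
  obtain ⟨B, hB⟩ := h
  have hB1 : (B : R) * (↑B⁻¹ : R) = 1 := B.mul_inv
  have hB2 : (↑B⁻¹ : R) * (B : R) = 1 := B.inv_mul
  rw [isUnit_iff_exists]
  refine ⟨c + (1 - c * z) * (↑B⁻¹ : R) * (1 - a * c), ?_, ?_⟩
  · have h2 : (a + z * (1 - c * a)) * (1 - c * z) = (1 - z * c) * (B : R) := by
      rw [hB]; noncomm_ring
    calc (a + z * (1 - c * a)) * (c + (1 - c * z) * (↑B⁻¹ : R) * (1 - a * c))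
        = (a + z * (1 - c * a)) * c
          + ((a + z * (1 - c * a)) * (1 - c * z)) * ((↑B⁻¹ : R) * (1 - a * c)) := by
          noncomm_ring
      _ = (a + z * (1 - c * a)) * c
          + (1 - z * c) * (((B : R) * (↑B⁻¹ : R)) * (1 - a * c)) := by
          rw [h2]; noncomm_ring
      _ = (a + z * (1 - c * a)) * c + (1 - z * c) * (1 - a * c) := by
          rw [hB1]; noncomm_ring
      _ = 1 := by noncomm_ring
  · have h1 : (1 - a * c) * (a + z * (1 - c * a)) = (B : R) * (1 - c * a) := by
      rw [hB]; noncomm_ring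
    calc (c + (1 - c * z) * (↑B⁻¹ : R) * (1 - a * c)) * (a + z * (1 - c * a))
        = c * (a + z * (1 - c * a))
          + ((1 - c * z) * (↑B⁻¹ : R)) * ((1 - a * c) * (a + z * (1 - c * a))) := by
          noncomm_ring
      _ = c * (a + z * (1 - c * a))
          + (1 - c * z) * (((↑B⁻¹ : R) * (B : R)) * (1 - c * a)) := by
          rw [h1]; noncomm_ring
      _ = c * (a + z * (1 - c * a)) + (1 - c * z) * (1 - c * a) := by
          rw [hB2]; noncomm_ring
      _ = 1 := by noncomm_ring

/-- Vaserstein-type flip, other direction: if `a + z*(1 - c*a)` is a unit,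
so is `a + (1 - a*c)*z`. -/
lemma flip_unit_left_to_right {R : Type*} [Ring R] (a c z : R)
    (h : IsUnit (a + z * (1 - c * a))) : IsUnit (a + (1 - a * c) * z) := by
  obtain ⟨A, hA⟩ := h
  have hA1 : (A : R) * (↑A⁻¹ : R) = 1 := A.mul_inv
  have hA2 : (↑A⁻¹ : R) * (A : R) = 1 := A.inv_mul
  rw [isUnit_iff_exists]
  refine ⟨c + (1 - c * a) * (↑A⁻¹ : R) * (1 - z * c), ?_, ?_⟩
  · have h1 : (a + (1 - a * c) * z) * (1 - c * a) = (1 - a * c) * (A : R) := by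
      rw [hA]; noncomm_ring
    calc (a + (1 - a * c) * z) * (c + (1 - c * a) * (↑A⁻¹ : R) * (1 - z * c))
        = (a + (1 - a * c) * z) * c
          + ((a + (1 - a * c) * z) * (1 - c * a)) * ((↑A⁻¹ : R) * (1 - z * c)) := by
          noncomm_ring
      _ = (a + (1 - a * c) * z) * c
          + (1 - a * c) * (((A : R) * (↑A⁻¹ : R)) * (1 - z * c)) := by
          rw [h1]; noncomm_ring
      _ = (a + (1 - a * c) * z) * c + (1 - a * c) * (1 - z * c) := by
          rw [hA1]; noncomm_ring
      _ = 1 := by noncomm_ring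
  · have h2 : (1 - z * c) * (a + (1 - a * c) * z) = (A : R) * (1 - c * z) := by
      rw [hA]; noncomm_ring
    calc (c + (1 - c * a) * (↑A⁻¹ : R) * (1 - z * c)) * (a + (1 - a * c) * z)
        = c * (a + (1 - a * c) * z)
          + ((1 - c * a) * (↑A⁻¹ : R)) * ((1 - z * c) * (a + (1 - a * c) * z)) := by
          noncomm_ring
      _ = c * (a + (1 - a * c) * z)
          + (1 - c * a) * (((↑A⁻¹ : R) * (A : R)) * (1 - c * z)) := by
          rw [h2]; noncomm_ring
      _ = c * (a + (1 - a * c) * z) + (1 - c * a) * (1 - c * z) := by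
          rw [hA2]; noncomm_ring
      _ = 1 := by noncomm_ring

/-- For a `Γ`-graded ring `R`, the right graded stable range 1 condition is equivalent to the
left graded stable range 1 condition. -/
theorem gradedStableRangeOne_iff_leftGradedStableRangeOne
    {Γ R : Type*} [AddGroup Γ] [DecidableEq Γ] [Ring R]
    (𝒜 : Γ → AddSubgroup R) [GradedRing 𝒜] :
    GradedStableRangeOne 𝒜 ↔ LeftGradedStableRangeOne 𝒜 := by
  constructor
  · rintro hR γ δ a ha b hb ⟨c, hc, d, hd, h1⟩
    have hf : (1 : R) - a * c ∈ 𝒜 0 := by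
      refine sub_mem (SetLike.one_mem_graded 𝒜) ?_
      have := SetLike.mul_mem_graded ha hc
      rwa [add_neg_cancel] at this
    have h1' : (1 : R) ∈ 𝒜 (-(0 : Γ)) := by
      rw [neg_zero]; exact SetLike.one_mem_graded 𝒜
    obtain ⟨z, hz, hu⟩ := hR γ 0 a ha (1 - a * c) hf
      ⟨c, hc, 1, h1', by noncomm_ring⟩
    have hz' : z ∈ 𝒜 γ := by rwa [neg_zero, zero_add] at hz
    refine ⟨z * d, SetLike.mul_mem_graded hz' hd, ?_⟩
    have hu2 := flip_unit_right_to_left a c z hu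
    have h2 : (1 : R) - c * a = d * b := by rw [← h1]; abel
    rwa [h2, ← mul_assoc] at hu2
  · rintro hL γ δ a ha b hb ⟨c, hc, d, hd, h1⟩
    have he : (1 : R) - c * a ∈ 𝒜 0 := by
      refine sub_mem (SetLike.one_mem_graded 𝒜) ?_
      have := SetLike.mul_mem_graded hc ha
      rwa [neg_add_cancel] at this
    have h1' : (1 : R) ∈ 𝒜 (-(0 : Γ)) := by
      rw [neg_zero]; exact SetLike.one_mem_graded 𝒜
    obtain ⟨z, hz, hu⟩ := hL γ 0 a ha (1 - c * a) he
      ⟨c, hc, 1, h1', by noncomm_ring⟩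
    have hz' : z ∈ 𝒜 γ := by rwa [neg_zero, add_zero] at hz
    refine ⟨d * z, SetLike.mul_mem_graded hd hz', ?_⟩
    have hu2 := flip_unit_left_to_right a c z hu
    have h2 : (1 : R) - a * c = b * d := by rw [← h1]; abel
    rwa [h2, mul_assoc] at hu2
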